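/- arXiv:2005.09944 — 3 statements merged into one kernel-verified Lean document; each statement's English description precedes it below -/
import Mathlib

section
/- In the lottery game among m ≥ 1 players where each player independently flips a fair coin until the first tail and records the number of heads as its level, and where the level of any two distinct players are independent after conditioning as in the single shared-interaction model (formally: the levels X_1,…,X_m are i.i.d. geometric with Pr(X_i ≥ k) = 2^{-k}), and m ≤ n, the probability that exactly one player attains the maximum level is at least 1/16. -/
/-!
Pick the threshold `K = ⌊log₂ m⌋ + 2`, so that `p = 2^{-K}` satisfies `1/4 ≤ m p < 1/2`. The events
"player `u` reaches level `K` and nobody else does" are disjoint, each forces `u` to be the unique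
maximum, and by independence each has probability `p (1 - p)^{m-1} ≥ p (1 - m p)`.
Summing over `u` gives at least `m p (1 - m p) ≥ 1/8`.
-/

open MeasureTheory ProbabilityTheory
open scoped ENNReal

lemma one_div_eight_le_mul_mul_one_sub_pow {p : ℝ} (hp : 0 ≤ p) (k : ℕ)
    (hlo : 1 / 4 ≤ (k + 1) * p) (hhi : (k + 1) * p ≤ 1 / 2) :
    1 / 8 ≤ (k + 1) * (p * (1 - p) ^ k) := by
  have hk : (0 : ℝ) ≤ k := k.cast_nonneg
  have hbernoulli : 1 - k * p ≤ (1 - p) ^ k := by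
    simpa [sub_eq_add_neg] using one_add_mul_le_pow (a := -p) (by nlinarith) k
  nlinarith

lemma mul_half_pow_log_add_two_mem {m : ℕ} (hm : m ≠ 0) :
    1 / 4 ≤ (m : ℝ) * (1 / 2) ^ (Nat.log 2 m + 2) ∧
      (m : ℝ) * (1 / 2) ^ (Nat.log 2 m + 2) ≤ 1 / 2 := by
  have hlo : ((2 : ℕ) ^ Nat.log 2 m : ℝ) ≤ m := by exact_mod_cast Nat.pow_log_le_self 2 hm
  have hhi : (m : ℝ) < (2 : ℕ) ^ (Nat.log 2 m + 1) := by
    exact_mod_cast Nat.lt_pow_succ_log_self one_lt_two m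
  have hpos : (0 : ℝ) < 2 ^ Nat.log 2 m := by positivity
  push_cast at hlo hhi
  rw [one_div_pow, mul_one_div, pow_add] at *
  constructor
  · rw [le_div_iff₀ (by positivity)]; linarith
  · rw [div_le_iff₀ (by positivity)]; linarith

lemma ENNReal.ofReal_mul_one_sub_pow {p : ℝ} (hp₀ : 0 ≤ p) (hp₁ : p ≤ 1) (k : ℕ) :
    ENNReal.ofReal (p * (1 - p) ^ k) = ENNReal.ofReal p * (1 - ENNReal.ofReal p) ^ k := by
  rw [ENNReal.ofReal_mul hp₀, ENNReal.ofReal_pow (sub_nonneg.2 hp₁), ENNReal.ofReal_sub _ hp₀,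
    ENNReal.ofReal_one]

section AloneAbove

variable {Ω ι β : Type*} [DecidableEq ι] [LinearOrder β]

def aloneAbove (X : ι → Ω → β) (K : β) (u : ι) : Set Ω :=
  ⋂ v, X v ⁻¹' (if v = u then Set.Ici K else Set.Iio K)

lemma mem_aloneAbove {X : ι → Ω → β} {K : β} {u : ι} {ω : Ω} :
    ω ∈ aloneAbove X K u ↔ K ≤ X u ω ∧ ∀ v ≠ u, X v ω < K := by
  simp only [aloneAbove, Set.mem_iInter, Set.mem_preimage]
  refine ⟨fun h => ⟨by simpa using h u, fun v hv => by simpa [hv] using h v⟩, ?_⟩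
  rintro ⟨hu, hv⟩ v
  by_cases h : v = u
  · subst h; simpa using hu
  · simpa [h] using hv v h

lemma pairwise_disjoint_aloneAbove (X : ι → Ω → β) (K : β) :
    Pairwise (Function.onFun Disjoint (aloneAbove X K)) := by
  intro u v huv
  refine Set.disjoint_left.2 fun ω hu hv => ?_
  exact (mem_aloneAbove.1 hv).2 u huv |>.not_ge (mem_aloneAbove.1 hu).1

lemma iUnion_aloneAbove_subset (X : ι → Ω → β) (K : β) :
    ⋃ u, aloneAbove X K u ⊆ {ω | ∃! i, ∀ j, X j ω ≤ X i ω} := by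
  simp only [Set.iUnion_subset_iff]
  intro u ω hω
  obtain ⟨hu, hv⟩ := mem_aloneAbove.1 hω
  refine ⟨u, fun j => ?_, fun i hi => ?_⟩
  · rcases eq_or_ne j u with rfl | hj
    · exact le_rfl
    · exact (hv j hj).le.trans hu
  · by_contra hiu
    exact (hv i hiu).not_ge (hu.trans (hi u))

variable [Fintype ι] [MeasurableSpace Ω] [TopologicalSpace β] [OrderClosedTopology β]
  [MeasurableSpace β] [OpensMeasurableSpace β] {X : ι → Ω → β}

lemma measurableSet_aloneAbove (hX : ∀ i, Measurable (X i)) (K : β) (u : ι) :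
    MeasurableSet (aloneAbove X K u) :=
  MeasurableSet.iInter fun v => hX v (by split_ifs; exacts [measurableSet_Ici, measurableSet_Iio])

lemma measure_aloneAbove (μ : Measure Ω) [IsProbabilityMeasure μ]
    (hX : ∀ i, Measurable (X i)) (hind : iIndepFun X μ) (K : β) (u : ι) :
    μ (aloneAbove X K u) =
      μ (X u ⁻¹' Set.Ici K) * ∏ v ∈ Finset.univ.erase u, (1 - μ (X v ⁻¹' Set.Ici K)) := by
  have hsets : ∀ v ∈ Finset.univ, MeasurableSet (if v = u then Set.Ici K else Set.Iio K) := by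
    intro v _
    split_ifs
    exacts [measurableSet_Ici, measurableSet_Iio]
  have hcompl : ∀ v, X v ⁻¹' Set.Iio K = (X v ⁻¹' Set.Ici K)ᶜ := fun v => by
    ext; simp
  have hprod := hind.measure_inter_preimage_eq_mul Finset.univ hsets
  simp only [Finset.mem_univ, Set.iInter_true] at hprod
  rw [aloneAbove, hprod, ← Finset.mul_prod_erase _ _ (Finset.mem_univ u), if_pos rfl]
  refine congrArg _ (Finset.prod_congr rfl fun v hv => ?_)
  rw [if_neg (Finset.ne_of_mem_erase hv), hcompl, prob_compl_eq_one_sub (hX v measurableSet_Ici)]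

end AloneAbove

theorem stmt3_general {Ω : Type*} [MeasurableSpace Ω] (μ : Measure Ω) [IsProbabilityMeasure μ]
    (m : ℕ) (hm : 1 ≤ m)
    (X : Fin m → Ω → ℕ) (hmeas : ∀ i, Measurable (X i))
    (hind : iIndepFun X μ)
    (hgeom : ∀ (i : Fin m) (k : ℕ), μ {ω | k ≤ X i ω} = (1 / 2 : ℝ≥0∞) ^ k) :
    (1 : ℝ≥0∞) / 16 ≤ μ {ω | ∃! i : Fin m, ∀ j : Fin m, X j ω ≤ X i ω} := by
  obtain ⟨k, rfl⟩ : ∃ k, m = k + 1 := ⟨m - 1, by omega⟩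
  set K := Nat.log 2 (k + 1) + 2
  set p : ℝ := (1 / 2) ^ K
  have hp₀ : 0 ≤ p := by positivity
  have hp₁ : p ≤ 1 := pow_le_one₀ (by norm_num) (by norm_num)
  have hpK : ∀ u, μ (X u ⁻¹' Set.Ici K) = ENNReal.ofReal p := fun u => by
    rw [ENNReal.ofReal_pow (by norm_num), one_div, ENNReal.ofReal_inv_of_pos two_pos,
      ENNReal.ofReal_ofNat, ← one_div]
    exact hgeom u K
  have hA : ∀ u, μ (aloneAbove X K u) = ENNReal.ofReal (p * (1 - p) ^ k) := fun u => by
    simp [measure_aloneAbove μ hmeas hind K u, hpK, ENNReal.ofReal_mul_one_sub_pow hp₀ hp₁]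
  obtain ⟨hlo, hhi⟩ := mul_half_pow_log_add_two_mem k.succ_ne_zero
  push_cast at hlo hhi
  calc (1 : ℝ≥0∞) / 16 = ENNReal.ofReal (1 / 16) := by
        rw [ENNReal.ofReal_div_of_pos (by norm_num)]; simp
    _ ≤ ENNReal.ofReal ((k + 1) * (p * (1 - p) ^ k)) :=
        ENNReal.ofReal_le_ofReal ((one_div_eight_le_mul_mul_one_sub_pow hp₀ k hlo hhi).trans' (by norm_num))
    _ = ∑ u, μ (aloneAbove X K u) := by
        rw [ENNReal.ofReal_mul (by positivity), ← Nat.cast_succ, ENNReal.ofReal_natCast]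
        simp [hA]
    _ = μ (⋃ u, aloneAbove X K u) := by
        rw [measure_iUnion (pairwise_disjoint_aloneAbove X K) (measurableSet_aloneAbove hmeas K),
          tsum_fintype]
    _ ≤ _ := measure_mono (iUnion_aloneAbove_subset X K)

/-- Lottery game: `m` players (`1 ≤ m ≤ n`, `n ≥ 2`) draw i.i.d. levels
`X i` with `Pr(X i ≥ k) = (1/2)^k`.  Then with probability at least `1/16`
exactly one player attains the maximum level. -/
theorem stmt3 {Ω : Type*} [MeasurableSpace Ω] (μ : Measure Ω) [IsProbabilityMeasure μ]
    (n m : ℕ) (hn : 2 ≤ n) (hm : 1 ≤ m) (hmn : m ≤ n)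
    (X : Fin m → Ω → ℕ) (hmeas : ∀ i, Measurable (X i))
    (hind : iIndepFun X μ)
    (hgeom : ∀ (i : Fin m) (k : ℕ), μ {ω | k ≤ X i ω} = (1 / 2 : ℝ≥0∞) ^ k) :
    (1 : ℝ≥0∞) / 16 ≤ μ {ω | ∃! i : Fin m, ∀ j : Fin m, X j ω ≤ X i ω} :=
  stmt3_general μ m hm X hmeas hind hgeom
end

section
/- Consider a Markov chain on {0, 1, …, n} tracking a quantity n_A (the number of mode-A agents), where at each step n_A increases by 1 with probability at least 4/9 whenever n_A ≤ n/3, and decreases by 1 with probability at most 1/9 (otherwise unchanged). Then starting from any value, n_A reaches ⌈n/3⌉ within O(n) steps with probability 1 − e^{−Ω(n)}. -/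
open MeasureTheory ProbabilityTheory
open scoped ENNReal Function

/-!
While the walk has stayed at or below `n / 3`, the potential `2⁻¹ ^ Z t` shrinks in expectation
by a factor `8 / 9` per step: from level `k` its next value has mean `2⁻¹ ^ k * (u / 2 + m + 2 d)`,
where `u ≥ 4 / 9` and `d ≤ 1 / 9` are the conditional probabilities of going up and down and
`u + m + d = 1`. Starting at most `1`, after `12 n` steps it is at most `(8 / 9) ^ (12 n)`, while on
the event of never having reached `n / 3` it is at least `2⁻¹ ^ n`. Hence that event has probability
at most `2 ^ n * (8 / 9) ^ (12 n) ≤ exp (-n / 2)`, since `2 * (8 / 9) ^ 12 < exp (-1 / 2)`.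
-/

lemma inv_two_mul_add_add_two_mul_le {u m d a : ℝ≥0∞} (ha : a ≠ ∞) (hsum : u + m + d ≤ a)
    (hu : 4 / 9 * a ≤ u) (hd : d ≤ 1 / 9 * a) : 2⁻¹ * u + m + 2 * d ≤ 8 / 9 * a := by
  have hfin : u + m + d ≠ ∞ := ne_top_of_le_ne_top ha hsum
  simp only [ENNReal.add_ne_top] at hfin
  obtain ⟨⟨hu', hm'⟩, hd'⟩ := hfin
  rw [← ENNReal.toReal_le_toReal (by finiteness) (by finiteness)] at hsum hu hd ⊢
  simp only [ne_eq, ENNReal.add_eq_top, or_self, not_false_eq_true, ENNReal.toReal_add,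
    ENNReal.toReal_mul, ENNReal.toReal_div, ENNReal.toReal_ofNat, one_div, ENNReal.toReal_inv,
    ENNReal.inv_eq_top, OfNat.ofNat_ne_zero, ENNReal.mul_ne_top, ENNReal.ofNat_ne_top, hu', hm', hd']
    at hsum hu hd ⊢
  linarith

lemma two_pow_mul_le_exp (n : ℕ) :
    (2 : ℝ≥0∞) ^ n * (8 / 9) ^ (12 * n) ≤ ENNReal.ofReal (Real.exp (-(1 / 2) * n)) := by
  rw [pow_mul, ← mul_pow, mul_comm (-(1 / 2) : ℝ), Real.exp_nat_mul,
    ENNReal.ofReal_pow (Real.exp_nonneg _)]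
  gcongr
  calc (2 : ℝ≥0∞) * (8 / 9) ^ 12 = ENNReal.ofReal (2 * (8 / 9) ^ 12) := by
        rw [ENNReal.ofReal_mul zero_le_two, ENNReal.ofReal_pow (by norm_num),
          ENNReal.ofReal_div_of_pos (by norm_num)]
        simp
    _ ≤ ENNReal.ofReal (Real.exp (-(1 / 2))) := by
        gcongr
        linarith [Real.add_one_le_exp (-(1 / 2) : ℝ)]

section OneStep

variable {Ω : Type*} [MeasurableSpace Ω] {μ : Measure Ω}

lemma setLIntegral_inv_two_pow_le [IsFiniteMeasure μ] {X Y : Ω → ℕ} (hX : Measurable X)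
    (hY : Measurable Y) {A : Set Ω} (hA : MeasurableSet A) {k : ℕ} (hXA : ∀ ω ∈ A, X ω = k)
    (hstep : ∀ ω, Y ω = X ω + 1 ∨ Y ω = X ω ∨ X ω = Y ω + 1)
    (hup : 4 / 9 * μ A ≤ μ (A ∩ {ω | Y ω = X ω + 1}))
    (hdown : μ (A ∩ {ω | X ω = Y ω + 1}) ≤ 1 / 9 * μ A) :
    ∫⁻ ω in A, 2⁻¹ ^ Y ω ∂μ ≤ 8 / 9 * (2⁻¹ ^ k * μ A) := by
  set U := A ∩ {ω | Y ω = X ω + 1}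
  set N := A ∩ {ω | Y ω = X ω}
  set D := A ∩ {ω | X ω = Y ω + 1}
  have hU : MeasurableSet U := hA.inter (measurableSet_eq_fun hY (hX.add_const 1))
  have hN : MeasurableSet N := hA.inter (measurableSet_eq_fun hY hX)
  have hD : MeasurableSet D := hA.inter (measurableSet_eq_fun hX (hY.add_const 1))
  have hsum : μ U + μ N + μ D ≤ μ A := by
    rw [← measure_union _ hN, ← measure_union _ hD]
    · exact measure_mono (Set.union_subset
        (Set.union_subset Set.inter_subset_left Set.inter_subset_left) Set.inter_subset_left)
    · exact Set.disjoint_left.2 fun ω hω ⟨_, (h : X ω = Y ω + 1)⟩ => by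
        rcases hω with ⟨_, (h' : Y ω = X ω + 1)⟩ | ⟨_, (h' : Y ω = X ω)⟩ <;> omega
    · exact Set.disjoint_left.2 fun ω ⟨_, (h : Y ω = X ω + 1)⟩ ⟨_, (h' : Y ω = X ω)⟩ => by omega
  have hbound : ∀ {S : Set Ω} (c : ℝ≥0∞), MeasurableSet S → (∀ ω ∈ S, 2⁻¹ ^ Y ω = c) →
      ∫⁻ ω in S, 2⁻¹ ^ Y ω ∂μ = c * μ S := fun c hS hc =>
    (setLIntegral_congr_fun hS hc).trans (setLIntegral_const _ c)
  have hUval : ∀ ω ∈ U, (2⁻¹ : ℝ≥0∞) ^ Y ω = 2⁻¹ ^ k * 2⁻¹ :=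
    fun ω ⟨hωA, (hω : Y ω = X ω + 1)⟩ => by rw [hω, hXA ω hωA, pow_succ]
  have hNval : ∀ ω ∈ N, (2⁻¹ : ℝ≥0∞) ^ Y ω = 2⁻¹ ^ k :=
    fun ω ⟨hωA, (hω : Y ω = X ω)⟩ => by rw [hω, hXA ω hωA]
  have hDval : ∀ ω ∈ D, (2⁻¹ : ℝ≥0∞) ^ Y ω = 2⁻¹ ^ k * 2 :=
    fun ω ⟨hωA, (hω : X ω = Y ω + 1)⟩ => by
      rw [← hXA ω hωA, hω, pow_succ, mul_assoc,
        ENNReal.inv_mul_cancel two_ne_zero ENNReal.ofNat_ne_top, mul_one]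
  have hcover : A ⊆ U ∪ N ∪ D := fun ω hω => by
    rcases hstep ω with h | h | h
    exacts [Or.inl (Or.inl ⟨hω, h⟩), Or.inl (Or.inr ⟨hω, h⟩), Or.inr ⟨hω, h⟩]
  calc ∫⁻ ω in A, 2⁻¹ ^ Y ω ∂μ
      ≤ ∫⁻ ω in U, 2⁻¹ ^ Y ω ∂μ + ∫⁻ ω in N, 2⁻¹ ^ Y ω ∂μ + ∫⁻ ω in D, 2⁻¹ ^ Y ω ∂μ :=
        (lintegral_mono_set hcover).trans
          ((lintegral_union_le _ _ _).trans (by gcongr; exact lintegral_union_le _ _ _))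
    _ = 2⁻¹ ^ k * (2⁻¹ * μ U + μ N + 2 * μ D) := by
        rw [hbound _ hU hUval, hbound _ hN hNval, hbound _ hD hDval]
        ring
    _ ≤ 2⁻¹ ^ k * (8 / 9 * μ A) := by
        gcongr
        exact inv_two_mul_add_add_two_mul_le (measure_ne_top μ A) hsum hup hdown
    _ = 8 / 9 * (2⁻¹ ^ k * μ A) := by ring

end OneStep

section Walk

variable {Ω : Type*} {Z : ℕ → Ω → ℕ} {n t : ℕ}

abbrev history (Z : ℕ → Ω → ℕ) (t : ℕ) : MeasurableSpace Ω :=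
  ⨆ s ∈ Finset.range (t + 1), MeasurableSpace.comap (Z s) ⊤

lemma measurableSet_history_preimage {s : ℕ} (hst : s ≤ t) (B : Set ℕ) :
    MeasurableSet[history Z t] (Z s ⁻¹' B) :=
  le_iSup₂ (f := fun s (_ : s ∈ Finset.range (t + 1)) => MeasurableSpace.comap (Z s) ⊤) s
    (Finset.mem_range_succ_iff.2 hst) _ ⟨B, trivial, rfl⟩

def staysLow (Z : ℕ → Ω → ℕ) (n t : ℕ) : Set Ω := {ω | ∀ s ≤ t, 3 * Z s ω ≤ n}

lemma staysLow_succ_subset : staysLow Z n (t + 1) ⊆ staysLow Z n t :=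
  fun _ hω s hs => hω s (hs.trans t.le_succ)

lemma measurableSet_history_staysLow : MeasurableSet[history Z t] (staysLow Z n t) := by
  have : staysLow Z n t = ⋂ s ∈ Set.Iic t, Z s ⁻¹' {k | 3 * k ≤ n} := by
    ext ω; simp [staysLow]
  rw [this]
  exact .biInter (Set.to_countable _) fun s hs => measurableSet_history_preimage hs _

variable [MeasurableSpace Ω] {μ : Measure Ω}

lemma history_le (hZ : ∀ t, Measurable (Z t)) (t : ℕ) : history Z t ≤ ‹MeasurableSpace Ω› :=
  iSup₂_le fun s _ => (hZ s).comap_le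

structure UpwardDrift (μ : Measure Ω) (Z : ℕ → Ω → ℕ) (n : ℕ) : Prop where
  step : ∀ t ω, Z (t + 1) ω = Z t ω + 1 ∨ Z (t + 1) ω = Z t ω ∨ Z t ω = Z (t + 1) ω + 1
  up : ∀ (t : ℕ) (A : Set Ω), MeasurableSet[history Z t] A →
    4 / 9 * μ (A ∩ {ω | 3 * Z t ω ≤ n}) ≤
      μ (A ∩ {ω | 3 * Z t ω ≤ n} ∩ {ω | Z (t + 1) ω = Z t ω + 1})
  down : ∀ (t : ℕ) (A : Set Ω), MeasurableSet[history Z t] A →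
    μ (A ∩ {ω | Z t ω = Z (t + 1) ω + 1}) ≤ 1 / 9 * μ A

noncomputable def potential (μ : Measure Ω) (Z : ℕ → Ω → ℕ) (n t : ℕ) : ℝ≥0∞ :=
  ∫⁻ ω in staysLow Z n t, 2⁻¹ ^ Z t ω ∂μ

lemma potential_le_one [IsProbabilityMeasure μ] : potential μ Z n t ≤ 1 :=
  calc potential μ Z n t ≤ ∫⁻ _, 1 ∂μ :=
        (setLIntegral_le_lintegral _ _).trans
          (lintegral_mono fun _ => pow_le_one₀ zero_le (ENNReal.inv_le_one.2 one_le_two))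
    _ = 1 := by simp

lemma measure_staysLow_le (hZ : ∀ t, Measurable (Z t)) :
    μ (staysLow Z n t) ≤ 2 ^ n * potential μ Z n t := by
  have hlow : 2⁻¹ ^ n * μ (staysLow Z n t) ≤ potential μ Z n t := by
    rw [← setLIntegral_const]
    refine setLIntegral_mono' (history_le hZ t _ measurableSet_history_staysLow) fun ω hω => ?_
    exact pow_le_pow_right_of_le_one' (ENNReal.inv_le_one.2 one_le_two)
      (by linarith [hω t le_rfl])
  calc μ (staysLow Z n t) = 2 ^ n * (2⁻¹ ^ n * μ (staysLow Z n t)) := by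
        rw [← mul_assoc, ← mul_pow, ENNReal.mul_inv_cancel two_ne_zero ENNReal.ofNat_ne_top,
          one_pow, one_mul]
    _ ≤ 2 ^ n * potential μ Z n t := by gcongr

lemma potential_succ_le [IsFiniteMeasure μ] (hZ : ∀ t, Measurable (Z t))
    (hdrift : UpwardDrift μ Z n) (t : ℕ) :
    potential μ Z n (t + 1) ≤ 8 / 9 * potential μ Z n t := by
  set L : ℕ → Set Ω := fun k => staysLow Z n t ∩ Z t ⁻¹' {k}
  have hL_hist : ∀ k, MeasurableSet[history Z t] (L k) := fun k =>
    measurableSet_history_staysLow.inter (measurableSet_history_preimage le_rfl _)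
  have hL : ∀ k, MeasurableSet (L k) := fun k => history_le hZ t _ (hL_hist k)
  have hdisj : Pairwise (Disjoint on L) := fun i j hij =>
    Set.disjoint_left.2 fun ω hi hj => hij (hi.2.symm.trans hj.2)
  have hunion : ⋃ k, L k = staysLow Z n t := by
    ext ω; simp [L]
  have hlow : ∀ k, L k ∩ {ω | 3 * Z t ω ≤ n} = L k := fun k =>
    Set.inter_eq_left.2 fun ω hω => hω.1 t le_rfl
  calc potential μ Z n (t + 1) ≤ ∫⁻ ω in staysLow Z n t, 2⁻¹ ^ Z (t + 1) ω ∂μ :=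
        lintegral_mono_set staysLow_succ_subset
    _ = ∑' k, ∫⁻ ω in L k, 2⁻¹ ^ Z (t + 1) ω ∂μ := by rw [← hunion, lintegral_iUnion hL hdisj]
    _ ≤ ∑' k, 8 / 9 * (2⁻¹ ^ k * μ (L k)) := by
        refine ENNReal.tsum_le_tsum fun k =>
          setLIntegral_inv_two_pow_le (hZ t) (hZ (t + 1)) (hL k) (fun ω hω => hω.2)
            (hdrift.step t) ?_ (hdrift.down t (L k) (hL_hist k))
        simpa only [hlow] using hdrift.up t (L k) (hL_hist k)
    _ = 8 / 9 * potential μ Z n t := by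
        rw [ENNReal.tsum_mul_left, potential, ← hunion, lintegral_iUnion hL hdisj]
        congr 1
        refine tsum_congr fun k => ?_
        rw [setLIntegral_congr_fun (hL k) fun ω hω => congrArg (2⁻¹ ^ ·) hω.2,
          setLIntegral_const]

lemma potential_le_pow [IsProbabilityMeasure μ] (hZ : ∀ t, Measurable (Z t))
    (hdrift : UpwardDrift μ Z n) (t : ℕ) :
    potential μ Z n t ≤ (8 / 9) ^ t := by
  induction t with
  | zero => simpa using potential_le_one
  | succ t ih =>
    calc potential μ Z n (t + 1) ≤ 8 / 9 * potential μ Z n t :=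
          potential_succ_le hZ hdrift t
      _ ≤ (8 / 9) ^ (t + 1) := by rw [pow_succ']; gcongr

end Walk

/-- A Markov-chain drift bound: if an `{0,…,n}`-valued process moves by at most
one per step, increases with probability at least `4/9` (conditioned on the
history) whenever it is at most `n/3`, and decreases with probability at most
`1/9`, then from any start it reaches `n/3` within `O(n)` steps with
probability `1 - e^{-Ω(n)}`. -/
theorem stmt10 : ∃ c C a : ℝ, 0 < c ∧ 0 < C ∧ 0 < a ∧ ∀ (n : ℕ), 3 ≤ n →
    ∀ (Ω : Type) [MeasurableSpace Ω] (μ : Measure Ω) [IsProbabilityMeasure μ]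
      (Z : ℕ → Ω → ℕ),
      (∀ t, Measurable (Z t)) →
      (∀ t ω, Z t ω ≤ n) →
      (∀ t ω, Z (t + 1) ω = Z t ω + 1 ∨ Z (t + 1) ω = Z t ω ∨ Z t ω = Z (t + 1) ω + 1) →
      (∀ (t : ℕ) (A : Set Ω),
        MeasurableSet[⨆ s ∈ Finset.range (t + 1), MeasurableSpace.comap (Z s) ⊤] A →
        (4 / 9 : ℝ≥0∞) * μ (A ∩ {ω | 3 * Z t ω ≤ n}) ≤
          μ (A ∩ {ω | 3 * Z t ω ≤ n} ∩ {ω | Z (t + 1) ω = Z t ω + 1})) →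
      (∀ (t : ℕ) (A : Set Ω),
        MeasurableSet[⨆ s ∈ Finset.range (t + 1), MeasurableSpace.comap (Z s) ⊤] A →
        μ (A ∩ {ω | Z t ω = Z (t + 1) ω + 1}) ≤ (1 / 9 : ℝ≥0∞) * μ A) →
      1 - ENNReal.ofReal (C * Real.exp (-a * n)) ≤
        μ {ω | ∃ t : ℕ, (t : ℝ) ≤ c * n ∧ (n : ℝ) / 3 ≤ Z t ω} := by
  refine ⟨12, 1, 1 / 2, by norm_num, by norm_num, by norm_num, ?_⟩
  intro n _ Ω _ μ _ Z hZ _ hstep hup hdown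
  set E := {ω | ∃ t : ℕ, (t : ℝ) ≤ 12 * n ∧ (n : ℝ) / 3 ≤ Z t ω}
  have hcompl : Eᶜ ⊆ staysLow Z n (12 * n) := fun ω hω s hs => by
    by_contra hhigh
    refine hω ⟨s, by exact_mod_cast hs, ?_⟩
    rw [div_le_iff₀ three_pos]
    exact_mod_cast (by omega : n ≤ Z s ω * 3)
  have hfail : μ Eᶜ ≤ ENNReal.ofReal (Real.exp (-(1 / 2) * n)) :=
    calc μ Eᶜ ≤ μ (staysLow Z n (12 * n)) := measure_mono hcompl
      _ ≤ 2 ^ n * potential μ Z n (12 * n) := measure_staysLow_le hZ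
      _ ≤ 2 ^ n * (8 / 9) ^ (12 * n) := by
        gcongr
        exact potential_le_pow hZ ⟨hstep, hup, hdown⟩ _
      _ ≤ _ := two_pow_mul_le_exp n
  rw [one_mul]
  calc 1 - ENNReal.ofReal (Real.exp (-(1 / 2) * n)) ≤ 1 - μ Eᶜ := tsub_le_tsub_left hfail 1
    _ ≤ μ E := tsub_le_iff_right.2 (by simpa using measure_univ_le_add_compl (μ := μ) E)
end

section
/- Let (Z_t) be a process on the integers with Z_0 = k where 24 ln n ≤ k < n/2^8, such that while k/2 ≤ Z_t ≤ 2k, Z_t increases by 1 with probability at least k/(8n) and decreases by 1 with probability at most k/(64n) at each step (otherwise unchanged). Then Z_t reaches 2k within 32n steps with probability 1 − O(1/n²). -/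
/-!
While `Z` stays in the band `S = [k/2, 2k)`, an up-step (probability at least `k/(8n)`) halves
`2 ^ -Z` and a down-step (probability at most `k/(64n)`) doubles it. Hence for
`ρ = 1 - 3k/(64n)` the weight `ρ ^ -t * 2 ^ (k - Z t)`, frozen once `Z` leaves `S`, is a
supermartingale of mean at most `1`. If `Z` has not reached `2k` by time `T = 32n`, then either
it stayed in `S`, and the weight is at least `ρ ^ -T * 2 ^ -k`, or it left `S` downwards, and the
weight is at least `2 ^ (k/2)`. By Markov's inequality and `k ≥ 24 ln n`, each of these events
has probability at most `1/n²`.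
-/

open MeasureTheory
open scoped ENNReal

theorem MeasureTheory.lintegral_mul_le_of_forall_setLIntegral_le {Ω : Type*}
    {m m₀ : MeasurableSpace Ω} (hm : m ≤ m₀) {μ : Measure Ω} {f g : Ω → ℝ≥0∞}
    (hf : Measurable[m] f) (hg : Measurable g) {c : ℝ≥0∞}
    (h : ∀ A, MeasurableSet[m] A → ∫⁻ ω in A, g ω ∂μ ≤ c * μ A) :
    ∫⁻ ω, f ω * g ω ∂μ ≤ c * ∫⁻ ω, f ω ∂μ := by
  have hle : (μ.withDensity g).trim hm ≤ (c • μ).trim hm := by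
    refine Measure.le_iff.2 fun A hA => ?_
    rw [trim_measurableSet_eq hm hA, trim_measurableSet_eq hm hA,
      withDensity_apply _ (hm A hA), Measure.smul_apply, smul_eq_mul]
    exact h A hA
  calc ∫⁻ ω, f ω * g ω ∂μ = ∫⁻ ω, f ω ∂(μ.withDensity g).trim hm := by
        rw [lintegral_trim hm hf, lintegral_withDensity_eq_lintegral_mul _ hg (hf.mono hm le_rfl)]
        simp only [Pi.mul_apply, mul_comm]
    _ ≤ ∫⁻ ω, f ω ∂(c • μ).trim hm := lintegral_mono' hle le_rfl
    _ = c * ∫⁻ ω, f ω ∂μ := by rw [lintegral_trim hm hf, lintegral_smul_measure, smul_eq_mul]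

theorem MeasureTheory.mul_measure_le_of_forall_le_mul {Ω : Type*} [MeasurableSpace Ω]
    {μ : Measure Ω} {f : Ω → ℝ≥0∞} (hf : AEMeasurable f μ) {E : Set Ω} {c d : ℝ≥0∞}
    (h : ∀ ω ∈ E, c ≤ f ω * d) : c * μ E ≤ d * ∫⁻ ω, f ω ∂μ :=
  calc c * μ E ≤ c * μ {ω | c ≤ f ω * d} := by gcongr; exact h
    _ ≤ ∫⁻ ω, f ω * d ∂μ := mul_meas_ge_le_lintegral₀ (hf.mul_const d) c
    _ = d * ∫⁻ ω, f ω ∂μ := by rw [lintegral_mul_const'' d hf, mul_comm]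

lemma MeasureTheory.one_sub_le_prob_of_measure_compl_le {Ω : Type*} [MeasurableSpace Ω]
    {μ : Measure Ω} [IsProbabilityMeasure μ] {s : Set Ω} {ε : ℝ≥0∞} (h : μ sᶜ ≤ ε) :
    1 - ε ≤ μ s := by
  rw [tsub_le_iff_right]
  calc 1 = μ (s ∪ sᶜ) := by rw [Set.union_compl_self, measure_univ]
    _ ≤ μ s + μ sᶜ := measure_union_le _ _
    _ ≤ μ s + ε := by gcongr

lemma ENNReal.two_pow_div_two_pow_add_ite {a b : ℕ} (h : b = a + 1 ∨ b = a ∨ a = b + 1) :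
    (2 : ℝ≥0∞) ^ a / 2 ^ b + (if b = a + 1 then 2⁻¹ else 0) = 1 + if a = b + 1 then 1 else 0 := by
  have h0 (n : ℕ) : (2 : ℝ≥0∞) ^ n ≠ 0 := pow_ne_zero _ two_ne_zero
  have htop (n : ℕ) : (2 : ℝ≥0∞) ^ n ≠ ⊤ := ENNReal.pow_ne_top ENNReal.ofNat_ne_top
  rcases h with rfl | rfl | rfl
  · rw [pow_succ, ENNReal.div_eq_inv_mul, ENNReal.mul_inv (.inl (h0 a)) (.inl (htop a)),
      mul_right_comm, ENNReal.inv_mul_cancel (h0 a) (htop a), one_mul]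
    simp [ENNReal.inv_two_add_inv_two, show a ≠ a + 1 + 1 by omega]
  · simp [ENNReal.div_self (h0 b) (htop b)]
  · rw [pow_succ, mul_comm, ENNReal.mul_div_cancel_right (h0 b) (htop b)]
    simp [one_add_one_eq_two, show b ≠ b + 1 + 1 by omega]

lemma MeasureTheory.setLIntegral_two_pow_div_le {Ω : Type*} [MeasurableSpace Ω]
    {μ : Measure Ω} [IsFiniteMeasure μ] {p q ρ : ℝ≥0∞} {X Y : Ω → ℕ} (hX : Measurable X)
    (hY : Measurable Y) (hstep : ∀ ω, Y ω = X ω + 1 ∨ Y ω = X ω ∨ X ω = Y ω + 1)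
    {A : Set Ω} (hup : p * μ A ≤ μ (A ∩ {ω | Y ω = X ω + 1}))
    (hdown : μ (A ∩ {ω | X ω = Y ω + 1}) ≤ q * μ A) (hρ : 1 + q ≤ ρ + 2⁻¹ * p) :
    ∫⁻ ω in A, 2 ^ X ω / 2 ^ Y ω ∂μ ≤ ρ * μ A := by
  set U := {ω | Y ω = X ω + 1}
  set D := {ω | X ω = Y ω + 1}
  have hU : MeasurableSet U := measurableSet_eq_fun hY (hX.add_const 1)
  have hD : MeasurableSet D := measurableSet_eq_fun hX (hY.add_const 1)
  have hbalance : ∫⁻ ω in A, 2 ^ X ω / 2 ^ Y ω ∂μ + 2⁻¹ * μ (A ∩ U) = μ A + μ (A ∩ D) := by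
    have hpt : ∀ ω, (2 : ℝ≥0∞) ^ X ω / 2 ^ Y ω + U.indicator (fun _ => 2⁻¹) ω =
        1 + D.indicator (fun _ => 1) ω := fun ω => by
      simpa [Set.indicator_apply, U, D] using ENNReal.two_pow_div_two_pow_add_ite (hstep ω)
    have := congrArg (fun f => ∫⁻ ω in A, f ω ∂μ) (funext hpt)
    simp only at this
    rwa [lintegral_add_right _ (measurable_const.indicator hU), lintegral_add_left measurable_const,
      lintegral_indicator_const hU, lintegral_indicator_const hD, setLIntegral_const,
      Measure.restrict_apply hU, Measure.restrict_apply hD, Set.inter_comm U,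
      Set.inter_comm D, one_mul, one_mul] at this
  have hfin : 2⁻¹ * (p * μ A) ≠ ⊤ :=
    ENNReal.mul_ne_top (by simp) (ne_top_of_le_ne_top (measure_ne_top μ (A ∩ U)) hup)
  refine (ENNReal.add_le_add_iff_right hfin).1 ?_
  calc ∫⁻ ω in A, 2 ^ X ω / 2 ^ Y ω ∂μ + 2⁻¹ * (p * μ A)
      ≤ ∫⁻ ω in A, 2 ^ X ω / 2 ^ Y ω ∂μ + 2⁻¹ * μ (A ∩ U) := by gcongr
    _ = μ A + μ (A ∩ D) := hbalance
    _ ≤ (1 + q) * μ A := by rw [add_mul, one_mul]; gcongr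
    _ ≤ (ρ + 2⁻¹ * p) * μ A := by gcongr
    _ = ρ * μ A + 2⁻¹ * (p * μ A) := by rw [add_mul, mul_assoc]

lemma Nat.forall_mem_or_exists_first_notMem {α : Type*} (x : ℕ → α) (S : Set α) (T : ℕ) :
    (∀ s ≤ T, x s ∈ S) ∨ ∃ s ≤ T, (∀ r < s, x r ∈ S) ∧ x s ∉ S := by
  classical
  by_cases h : ∃ s, s ≤ T ∧ x s ∉ S
  · refine .inr ⟨Nat.find h, (Nat.find_spec h).1, fun r hr => ?_, (Nat.find_spec h).2⟩
    by_contra hx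
    exact Nat.find_min h hr ⟨hr.le.trans (Nat.find_spec h).1, hx⟩
  · push Not at h
    exact .inl h

namespace LazyWalk

variable {Ω : Type*} {Z : ℕ → Ω → ℕ} {S : Set ℕ} {ρ : ℝ≥0∞}

abbrev history (Z : ℕ → Ω → ℕ) (t : ℕ) : MeasurableSpace Ω :=
  ⨆ s ∈ Finset.range (t + 1), MeasurableSpace.comap (Z s) ⊤

lemma measurable_history {s t : ℕ} (hst : s ≤ t) : Measurable[history Z t] (Z s) :=
  Measurable.of_comap_le <| le_iSup₂ (f := fun s (_ : s ∈ Finset.range (t + 1)) =>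
    MeasurableSpace.comap (Z s) ⊤) s (Finset.mem_range_succ_iff.2 hst)

lemma history_mono {s t : ℕ} (hst : s ≤ t) : history Z s ≤ history Z t :=
  iSup₂_le fun _ hr => (measurable_history ((Finset.mem_range_succ_iff.1 hr).trans hst)).comap_le

lemma measurableSet_history_forall_mem (t : ℕ) :
    MeasurableSet[history Z t] {ω | ∀ s ≤ t, Z s ω ∈ S} := by
  simp only [Set.ofPred_forall]
  exact MeasurableSet.iInter fun s => MeasurableSet.iInter fun hs =>
    measurable_history hs MeasurableSet.of_discrete

open Classical in
noncomputable def stepFactor (S : Set ℕ) (ρ : ℝ≥0∞) (Z : ℕ → Ω → ℕ) (t : ℕ) (ω : Ω) : ℝ≥0∞ :=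
  if ∀ s ≤ t, Z s ω ∈ S then ρ⁻¹ * (2 ^ Z t ω / 2 ^ Z (t + 1) ω) else 1

/-- `ρ ^ -(t ∧ τ) * 2 ^ (Z 0 - Z (t ∧ τ))`, where `τ` is the first time with `Z τ ∉ S`. -/
noncomputable def expWeight (S : Set ℕ) (ρ : ℝ≥0∞) (Z : ℕ → Ω → ℕ) : ℕ → Ω → ℝ≥0∞
  | 0, _ => 1
  | t + 1, ω => expWeight S ρ Z t ω * stepFactor S ρ Z t ω

lemma measurable_stepFactor (t : ℕ) : Measurable[history Z (t + 1)] (stepFactor S ρ Z t) := by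
  refine Measurable.ite (history_mono t.le_succ _ (measurableSet_history_forall_mem t))
    (measurable_const.mul ?_) measurable_const
  exact (measurable_from_nat.comp (measurable_history t.le_succ)).div
    (measurable_from_nat.comp (measurable_history le_rfl))

lemma measurable_expWeight (t : ℕ) : Measurable[history Z t] (expWeight S ρ Z t) := by
  induction t with
  | zero => exact measurable_const
  | succ t ih => exact (ih.mono (history_mono t.le_succ) le_rfl).mul (measurable_stepFactor t)

lemma expWeight_mul_two_pow {ω : Ω} {t : ℕ} (h : ∀ s < t, Z s ω ∈ S) :
    expWeight S ρ Z t ω * 2 ^ Z t ω = ρ⁻¹ ^ t * 2 ^ Z 0 ω := by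
  induction t with
  | zero => simp [expWeight]
  | succ t ih =>
    have hfac : stepFactor S ρ Z t ω = ρ⁻¹ * (2 ^ Z t ω / 2 ^ Z (t + 1) ω) :=
      if_pos fun s hs => h s (Nat.lt_succ_of_le hs)
    rw [expWeight, hfac, mul_assoc, mul_assoc, ENNReal.div_mul_cancel (by simp) (by simp),
      mul_left_comm, ih fun s hs => h s (hs.trans t.lt_succ_self), pow_succ', mul_assoc]

lemma expWeight_eq_of_notMem {ω : Ω} {s t : ℕ} (hs : Z s ω ∉ S) (hst : s ≤ t) :
    expWeight S ρ Z t ω = expWeight S ρ Z s ω := by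
  induction t, hst using Nat.le_induction with
  | base => rfl
  | succ t hst ih =>
    rw [expWeight, ih, stepFactor, if_neg fun h => hs (h s hst), mul_one]

variable [MeasurableSpace Ω] {μ : Measure Ω} {p q : ℝ≥0∞}

lemma history_le (hZ : ∀ t, Measurable (Z t)) (t : ℕ) : history Z t ≤ ‹MeasurableSpace Ω› :=
  iSup₂_le fun s _ => (hZ s).comap_le

/-- `Z` moves by at most one per step and, conditionally on the history up to time `t` and on
`Z t ∈ S`, steps up with probability at least `p` and down with probability at most `q`. -/
structure IsDriftingWalk (μ : Measure Ω) (Z : ℕ → Ω → ℕ) (S : Set ℕ) (p q : ℝ≥0∞) : Prop where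
  measurable : ∀ t, Measurable (Z t)
  step : ∀ t ω, Z (t + 1) ω = Z t ω + 1 ∨ Z (t + 1) ω = Z t ω ∨ Z t ω = Z (t + 1) ω + 1
  up : ∀ t A, MeasurableSet[history Z t] A → A ⊆ {ω | Z t ω ∈ S} →
    p * μ A ≤ μ (A ∩ {ω | Z (t + 1) ω = Z t ω + 1})
  down : ∀ t A, MeasurableSet[history Z t] A → A ⊆ {ω | Z t ω ∈ S} →
    μ (A ∩ {ω | Z t ω = Z (t + 1) ω + 1}) ≤ q * μ A

lemma setLIntegral_stepFactor_le [IsFiniteMeasure μ] (hW : IsDriftingWalk μ Z S p q)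
    (hρ : 1 + q ≤ ρ + 2⁻¹ * p) {t : ℕ} {A : Set Ω}
    (hA : MeasurableSet[history Z t] A) :
    ∫⁻ ω in A, stepFactor S ρ Z t ω ∂μ ≤ μ A := by
  set G := {ω | ∀ s ≤ t, Z s ω ∈ S}
  have hG : MeasurableSet[history Z t] G := measurableSet_history_forall_mem t
  have hm := history_le hW.measurable t
  have hAG : A ∩ G ⊆ {ω | Z t ω ∈ S} := fun ω hω => hω.2 t le_rfl
  have hZt := hW.measurable t
  have hZt1 := hW.measurable (t + 1)
  have hratio : Measurable fun ω => (2 : ℝ≥0∞) ^ Z t ω / 2 ^ Z (t + 1) ω :=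
    (measurable_from_nat.comp hZt).div (measurable_from_nat.comp hZt1)
  have hinside := setLIntegral_two_pow_div_le (μ := μ) hZt hZt1 (hW.step t)
    (hW.up t _ (hA.inter hG) hAG) (hW.down t _ (hA.inter hG) hAG) hρ
  rw [← lintegral_inter_add_sdiff _ A (hm _ hG),
    setLIntegral_congr_fun (f := stepFactor S ρ Z t)
      (g := fun ω => ρ⁻¹ * (2 ^ Z t ω / 2 ^ Z (t + 1) ω)) (hm _ (hA.inter hG))
      fun ω hω => if_pos hω.2,
    setLIntegral_congr_fun (f := stepFactor S ρ Z t) (g := fun _ => 1) (hm _ (hA.diff hG))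
      fun ω hω => if_neg hω.2,
    lintegral_const_mul _ hratio, setLIntegral_const, one_mul,
    ← measure_inter_add_sdiff A (hm _ hG)]
  gcongr
  calc ρ⁻¹ * ∫⁻ ω in A ∩ G, 2 ^ Z t ω / 2 ^ Z (t + 1) ω ∂μ ≤ ρ⁻¹ * (ρ * μ (A ∩ G)) := by
        gcongr
    _ ≤ μ (A ∩ G) := by
        rw [← mul_assoc]
        exact mul_le_of_le_one_left' (ENNReal.inv_mul_le_one ρ)

lemma lintegral_expWeight_succ_le [IsFiniteMeasure μ] (hW : IsDriftingWalk μ Z S p q)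
    (hρ : 1 + q ≤ ρ + 2⁻¹ * p) (t : ℕ) :
    ∫⁻ ω, expWeight S ρ Z (t + 1) ω ∂μ ≤ ∫⁻ ω, expWeight S ρ Z t ω ∂μ := by
  simpa only [one_mul, expWeight] using lintegral_mul_le_of_forall_setLIntegral_le
    (history_le hW.measurable t) (measurable_expWeight t)
    ((measurable_stepFactor t).mono (history_le hW.measurable (t + 1)) le_rfl)
    fun A hA => (setLIntegral_stepFactor_le hW hρ hA).trans_eq (one_mul _).symm

lemma lintegral_expWeight_le [IsFiniteMeasure μ] (hW : IsDriftingWalk μ Z S p q)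
    (hρ : 1 + q ≤ ρ + 2⁻¹ * p) (t : ℕ) :
    ∫⁻ ω, expWeight S ρ Z t ω ∂μ ≤ μ Set.univ := by
  induction t with
  | zero => simp [expWeight]
  | succ t ih => exact (lintegral_expWeight_succ_le hW hρ t).trans ih

lemma mul_measure_le_of_le_expWeight_mul [IsProbabilityMeasure μ]
    (hW : IsDriftingWalk μ Z S p q) (hρ : 1 + q ≤ ρ + 2⁻¹ * p) {T : ℕ} {E : Set Ω}
    {c d : ℝ≥0∞} (h : ∀ ω ∈ E, c ≤ expWeight S ρ Z T ω * d) : c * μ E ≤ d :=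
  calc c * μ E ≤ d * ∫⁻ ω, expWeight S ρ Z T ω ∂μ := mul_measure_le_of_forall_le_mul
        ((measurable_expWeight T).mono (history_le hW.measurable T) le_rfl).aemeasurable h
    _ ≤ d := mul_le_of_le_one_right' ((lintegral_expWeight_le hW hρ T).trans_eq measure_univ)

theorem measure_forall_mem_le [IsProbabilityMeasure μ] (hW : IsDriftingWalk μ Z S p q)
    (hρ : 1 + q ≤ ρ + 2⁻¹ * p) (hρ0 : ρ ≠ 0) (hρtop : ρ ≠ ⊤)
    {z₀ b : ℕ} (hZ0 : ∀ ω, Z 0 ω = z₀) (hSb : ∀ z ∈ S, z ≤ b) (T : ℕ) :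
    μ {ω | ∀ s ≤ T, Z s ω ∈ S} ≤ ρ ^ T * 2 ^ b / 2 ^ z₀ := by
  set E := {ω | ∀ s ≤ T, Z s ω ∈ S}
  have hmarkov : ρ⁻¹ ^ T * 2 ^ z₀ * μ E ≤ 2 ^ b := by
    refine mul_measure_le_of_le_expWeight_mul hW hρ (T := T) fun ω hω => ?_
    rw [← hZ0 ω, ← expWeight_mul_two_pow fun s hs => hω s hs.le]
    gcongr
    · exact one_le_two
    · exact hSb _ (hω T le_rfl)
  rw [ENNReal.le_div_iff_mul_le (.inl (by simp)) (.inl (by simp))]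
  calc μ E * 2 ^ z₀ = ρ ^ T * (ρ⁻¹ ^ T * 2 ^ z₀ * μ E) := by
        rw [← mul_assoc, ← mul_assoc, ← mul_pow, ENNReal.mul_inv_cancel hρ0 hρtop, one_pow,
          one_mul, mul_comm]
    _ ≤ ρ ^ T * 2 ^ b := by gcongr

theorem measure_exit_le [IsProbabilityMeasure μ] (hW : IsDriftingWalk μ Z S p q)
    (hρ : 1 + q ≤ ρ + 2⁻¹ * p) (hρ1 : ρ ≤ 1)
    {z₀ y : ℕ} (hZ0 : ∀ ω, Z 0 ω = z₀) (T : ℕ) :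
    μ {ω | ∃ s ≤ T, (∀ r < s, Z r ω ∈ S) ∧ Z s ω ∉ S ∧ Z s ω ≤ y} ≤ 2 ^ y / 2 ^ z₀ := by
  rw [ENNReal.le_div_iff_mul_le (.inl (by simp)) (.inl (by simp)), mul_comm]
  refine mul_measure_le_of_le_expWeight_mul hW hρ (T := T) ?_
  rintro ω ⟨s, hsT, hbefore, hout, hsy⟩
  calc (2 : ℝ≥0∞) ^ z₀ = 1 * 2 ^ Z 0 ω := by rw [one_mul, hZ0]
    _ ≤ ρ⁻¹ ^ s * 2 ^ Z 0 ω := by gcongr; exact one_le_pow₀ (ENNReal.one_le_inv.2 hρ1)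
    _ = expWeight S ρ Z T ω * 2 ^ Z s ω := by
        rw [expWeight_eq_of_notMem hout hsT, expWeight_mul_two_pow hbefore]
    _ ≤ expWeight S ρ Z T ω * 2 ^ y := by gcongr; exact one_le_two

theorem measure_forall_lt_le [IsProbabilityMeasure μ] (hW : IsDriftingWalk μ Z S p q)
    (hρ : 1 + q ≤ ρ + 2⁻¹ * p) (hρ0 : ρ ≠ 0) (hρ1 : ρ ≤ 1)
    {z₀ b y : ℕ} (hZ0 : ∀ ω, Z 0 ω = z₀) (hSb : ∀ z ∈ S, z < b)
    (hSy : ∀ z < b, z ∉ S → z ≤ y) (T : ℕ) :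
    μ {ω | ∀ t ≤ T, Z t ω < b} ≤ ρ ^ T * 2 ^ b / 2 ^ z₀ + 2 ^ y / 2 ^ z₀ := by
  refine (measure_mono fun ω hω => ?_).trans ((measure_union_le _ _).trans (add_le_add
    (measure_forall_mem_le hW hρ hρ0 (ne_top_of_le_ne_top ENNReal.one_ne_top hρ1)
      hZ0 (fun z hz => (hSb z hz).le) T)
    (measure_exit_le hW hρ hρ1 hZ0 T)))
  rcases Nat.forall_mem_or_exists_first_notMem (Z · ω) S T with h | ⟨s, hs, hbefore, hout⟩
  · exact .inl h
  · exact .inr ⟨s, hs, hbefore, hout, hSy _ (hω s hs) hout⟩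

end LazyWalk

lemma Real.exp_two_mul_log {x : ℝ} (hx : 0 < x) : Real.exp (2 * Real.log x) = x ^ 2 := by
  rw [mul_comm, ← Real.rpow_def_of_pos hx, Real.rpow_two]

lemma one_sub_three_mul_div_nonneg {n k : ℕ} (hkn : 3 * k ≤ 64 * n) :
    0 ≤ 1 - 3 * (k : ℝ) / (64 * n) :=
  sub_nonneg.2 (div_le_one_of_le₀ (by exact_mod_cast hkn) (by positivity))

lemma two_pow_mul_one_sub_pow_le {n k : ℕ} (hn : 0 < n) (hk : 24 * Real.log n ≤ k)
    (hkn : 3 * k ≤ 64 * n) :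
    (2 : ℝ) ^ k * (1 - 3 * k / (64 * n)) ^ (32 * n) ≤ ((n : ℝ) ^ 2)⁻¹ := by
  have hn' : (0 : ℝ) < n := by exact_mod_cast hn
  have hbase := one_sub_three_mul_div_nonneg hkn
  calc (2 : ℝ) ^ k * (1 - 3 * k / (64 * n)) ^ (32 * n)
      ≤ Real.exp 1 ^ k * Real.exp (-(3 * k / (64 * n))) ^ (32 * n) := by
        gcongr
        · linarith [Real.add_one_le_exp 1]
        · exact Real.one_sub_le_exp_neg _
    _ = Real.exp (-(k / 2)) := by
        rw [Real.exp_one_pow, ← Real.exp_nat_mul, ← Real.exp_add]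
        congr 1
        push_cast
        field_simp
        ring
    _ ≤ Real.exp (-(2 * Real.log n)) := Real.exp_le_exp.2 (by linarith [Real.log_natCast_nonneg n])
    _ = ((n : ℝ) ^ 2)⁻¹ := by rw [Real.exp_neg, Real.exp_two_mul_log hn']

lemma sq_le_two_pow {n k m : ℕ} (hk : 24 * Real.log n ≤ k) (hkm : k ≤ 2 * m) :
    (n : ℝ) ^ 2 ≤ 2 ^ m := by
  rcases Nat.eq_zero_or_pos n with rfl | hn
  · simp
  have hlog2 := Real.log_two_gt_d9
  have hlogn := Real.log_natCast_nonneg n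
  have hkm' : (k : ℝ) ≤ 2 * m := by exact_mod_cast hkm
  rw [← Real.exp_two_mul_log (by exact_mod_cast hn), ← Real.rpow_natCast,
    Real.rpow_def_of_pos two_pos]
  exact Real.exp_le_exp.2 (by nlinarith)

lemma ENNReal.two_pow_eq_ofReal (m : ℕ) : (2 : ℝ≥0∞) ^ m = ENNReal.ofReal (2 ^ m) := by
  rw [ENNReal.ofReal_pow zero_le_two, ENNReal.ofReal_ofNat]

lemma ENNReal.natCast_div_eq_ofReal (k m : ℕ) (hm : 0 < m) :
    (k : ℝ≥0∞) / m = ENNReal.ofReal (k / m) := by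
  rw [ENNReal.ofReal_div_of_pos (by exact_mod_cast hm), ENNReal.ofReal_natCast,
    ENNReal.ofReal_natCast]

lemma one_add_div_le_ofReal_add {n k : ℕ} (hn : 0 < n) (hkn : 3 * k ≤ 64 * n) :
    1 + (k : ℝ≥0∞) / (64 * n) ≤
      ENNReal.ofReal (1 - 3 * k / (64 * n)) + 2⁻¹ * ((k : ℝ≥0∞) / (8 * n)) := by
  have hn' : (0 : ℝ) < n := by exact_mod_cast hn
  have hbase := one_sub_three_mul_div_nonneg hkn
  have h64 := ENNReal.natCast_div_eq_ofReal k (64 * n) (by omega)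
  have h8 := ENNReal.natCast_div_eq_ofReal k (8 * n) (by omega)
  have hhalf : (2 : ℝ≥0∞)⁻¹ = ENNReal.ofReal 2⁻¹ := by
    rw [ENNReal.ofReal_inv_of_pos two_pos, ENNReal.ofReal_ofNat]
  push_cast at h64 h8
  rw [h64, h8, hhalf, ← ENNReal.ofReal_one, ← ENNReal.ofReal_add zero_le_one (by positivity),
    ← ENNReal.ofReal_mul (by norm_num),
    ← ENNReal.ofReal_add hbase (by positivity)]
  exact ENNReal.ofReal_le_ofReal (le_of_eq (by field_simp; ring))

lemma ofReal_pow_mul_two_pow_div_le {n k : ℕ} (hn : 0 < n) (hk : 24 * Real.log n ≤ k)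
    (hkn : 3 * k ≤ 64 * n) :
    ENNReal.ofReal (1 - 3 * k / (64 * n)) ^ (32 * n) * 2 ^ (2 * k) / 2 ^ k ≤
      ENNReal.ofReal ((n : ℝ) ^ 2)⁻¹ := by
  have hn' : (0 : ℝ) < n := by exact_mod_cast hn
  have hbase := one_sub_three_mul_div_nonneg hkn
  rw [ENNReal.two_pow_eq_ofReal, ENNReal.two_pow_eq_ofReal, ← ENNReal.ofReal_pow hbase,
    ← ENNReal.ofReal_mul (by positivity), ← ENNReal.ofReal_div_of_pos (by positivity)]
  refine ENNReal.ofReal_le_ofReal (le_of_eq_of_le ?_ (two_pow_mul_one_sub_pow_le hn hk hkn))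
  rw [two_mul, pow_add]
  field_simp

lemma two_pow_half_div_two_pow_le {n k : ℕ} (hn : 0 < n) (hk : 24 * Real.log n ≤ k) :
    (2 : ℝ≥0∞) ^ (k / 2) / 2 ^ k ≤ ENNReal.ofReal ((n : ℝ) ^ 2)⁻¹ := by
  have hn' : (0 : ℝ) < n := by exact_mod_cast hn
  have hsq := sq_le_two_pow (m := k - k / 2) hk (by omega)
  rw [ENNReal.two_pow_eq_ofReal, ENNReal.two_pow_eq_ofReal,
    ← ENNReal.ofReal_div_of_pos (by positivity)]
  refine ENNReal.ofReal_le_ofReal ?_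
  have hsplit : (2 : ℝ) ^ k = 2 ^ (k / 2) * 2 ^ (k - k / 2) := by
    rw [← pow_add, Nat.add_sub_cancel' (Nat.div_le_self k 2)]
  rw [hsplit, div_mul_cancel_left₀ (by positivity)]
  exact inv_anti₀ (by positivity) hsq

lemma ofReal_pow_mul_two_pow_div_add_le {n k : ℕ} (hn : 0 < n) (hk : 24 * Real.log n ≤ k)
    (hkn : 3 * k ≤ 64 * n) :
    ENNReal.ofReal (1 - 3 * k / (64 * n)) ^ (32 * n) * 2 ^ (2 * k) / 2 ^ k +
      2 ^ (k / 2) / 2 ^ k ≤ ENNReal.ofReal (2 / (n : ℝ) ^ 2) :=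
  calc _ ≤ ENNReal.ofReal ((n : ℝ) ^ 2)⁻¹ + ENNReal.ofReal ((n : ℝ) ^ 2)⁻¹ :=
        add_le_add (ofReal_pow_mul_two_pow_div_le hn hk hkn) (two_pow_half_div_two_pow_le hn hk)
    _ = ENNReal.ofReal (2 / (n : ℝ) ^ 2) := by
        rw [← ENNReal.ofReal_add (by positivity) (by positivity)]
        ring_nf

/-- If a process starts at `k` with `24 ln n ≤ k < n/2⁸`, moves by at most one
per step, and while in the band `[k/2, 2k]` increases with probability at least
`k/(8n)` and decreases with probability at most `k/(64n)` (conditioned on the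
history), then it reaches `2k` within `32n` steps with probability
`1 - O(1/n²)`. -/
theorem stmt11 : ∃ C : ℝ, 0 < C ∧ ∀ (n k : ℕ), 2 ≤ n →
    24 * Real.log n ≤ (k : ℝ) → (k : ℝ) < (n : ℝ) / 2 ^ 8 →
    ∀ (Ω : Type) [MeasurableSpace Ω] (μ : Measure Ω) [IsProbabilityMeasure μ]
      (Z : ℕ → Ω → ℕ),
      (∀ t, Measurable (Z t)) →
      (∀ ω, Z 0 ω = k) →
      (∀ t ω, Z (t + 1) ω = Z t ω + 1 ∨ Z (t + 1) ω = Z t ω ∨ Z t ω = Z (t + 1) ω + 1) →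
      (∀ (t : ℕ) (A : Set Ω),
        MeasurableSet[⨆ s ∈ Finset.range (t + 1), MeasurableSpace.comap (Z s) ⊤] A →
        ((k : ℝ≥0∞) / (8 * n)) * μ (A ∩ {ω | k ≤ 2 * Z t ω ∧ Z t ω ≤ 2 * k}) ≤
          μ (A ∩ {ω | k ≤ 2 * Z t ω ∧ Z t ω ≤ 2 * k} ∩ {ω | Z (t + 1) ω = Z t ω + 1})) →
      (∀ (t : ℕ) (A : Set Ω),
        MeasurableSet[⨆ s ∈ Finset.range (t + 1), MeasurableSpace.comap (Z s) ⊤] A →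
        μ (A ∩ {ω | k ≤ 2 * Z t ω ∧ Z t ω ≤ 2 * k} ∩ {ω | Z t ω = Z (t + 1) ω + 1}) ≤
          ((k : ℝ≥0∞) / (64 * n)) * μ (A ∩ {ω | k ≤ 2 * Z t ω ∧ Z t ω ≤ 2 * k})) →
      1 - ENNReal.ofReal (C / (n : ℝ) ^ 2) ≤
        μ {ω | ∃ t ≤ 32 * n, 2 * k ≤ Z t ω} := by
  refine ⟨2, two_pos, fun n k hn hk hkn Ω _ μ _ Z hZ hZ0 hstep hup hdown => ?_⟩
  have hn0 : 0 < n := by omega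
  have h3k : 3 * k < 64 * n := by
    have : (k : ℝ) * 256 < n := by linarith [(lt_div_iff₀ (by norm_num : (0 : ℝ) < 2 ^ 8)).1 hkn]
    exact_mod_cast (by linarith : (3 * k : ℝ) < 64 * n)
  set S : Set ℕ := {z | k ≤ 2 * z ∧ z < 2 * k}
  have hband (t : ℕ) (A : Set Ω) (hA : A ⊆ {ω | Z t ω ∈ S}) :
      A ∩ {ω | k ≤ 2 * Z t ω ∧ Z t ω ≤ 2 * k} = A :=
    Set.inter_eq_left.2 fun ω hω => ⟨(hA hω).1, (hA hω).2.le⟩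
  have hW : LazyWalk.IsDriftingWalk μ Z S (k / (8 * n)) (k / (64 * n)) :=
    ⟨hZ, hstep, fun t A hA hAS => by simpa only [hband t A hAS] using hup t A hA,
      fun t A hA hAS => by simpa only [hband t A hAS] using hdown t A hA⟩
  have hρ0 : ENNReal.ofReal (1 - 3 * k / (64 * n)) ≠ 0 := by
    refine (ENNReal.ofReal_pos.2 (sub_pos.2 ((div_lt_one (by positivity)).2 ?_))).ne'
    exact_mod_cast h3k
  have hbelow (z : ℕ) (hz : z < 2 * k) (hzS : z ∉ S) : z ≤ k / 2 := by
    simp only [S, Set.mem_ofPred_eq, not_and, not_lt] at hzS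
    omega
  have hfail := LazyWalk.measure_forall_lt_le hW (one_add_div_le_ofReal_add hn0 h3k.le) hρ0
    (ENNReal.ofReal_le_one.2 (sub_le_self _ (by positivity))) hZ0 (fun z hz => hz.2) hbelow (32 * n)
  refine one_sub_le_prob_of_measure_compl_le ((measure_mono fun ω hω t ht => ?_).trans
    (hfail.trans (ofReal_pow_mul_two_pow_div_add_le hn0 hk h3k.le)))
  exact not_le.1 fun h => hω ⟨t, ht, h⟩
end
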